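/- arXiv:1601.05040 — 6 statements merged into one kernel-verified Lean document; each statement's English description precedes it below -/
import Mathlib

section
/- Fix an integer δ ≥ 2. There exists N (depending on δ) such that for every n ≥ N with (δ+1) dividing n, there exists Q (depending on n and δ) such that for every q ≥ Q the number of proper q-colorings satisfies hom(K_{δ,n−δ}, K_q) < hom(G_1, K_q). -/
/-- The number of `H`-colorings of a simple graph `G`, where the target graph (with loops
allowed) is given by a symmetric adjacency relation `H` on its vertex type. -/
noncomputable def homCount {α β : Type*} (G : SimpleGraph α) (H : β → β → Prop) : ℕ :=
  Nat.card {f : α → β // ∀ ⦃u v⦄, G.Adj u v → H (f u) (f v)}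

/-- The graph `G₁` on `m * (δ+1)` vertices: `m` disjoint copies of `K_{δ+1}` (the copy `a`
has vertex set `{a} × Fin (δ+1)`), together with the edges of a star on the specified
vertices `(a, 0)`, centered at the specified vertex `(0, 0)` of the first copy. -/
def G1 (m δ : ℕ) : SimpleGraph (Fin m × Fin (δ + 1)) :=
  SimpleGraph.fromRel fun x y => x.1 = y.1 ∨ (x.2 = 0 ∧ y.2 = 0 ∧ (x.1 : ℕ) = 0)

/-!
Both counts are `q ^ n - e q ^ (n - 1) + O(q ^ (n - 2))`, where `e` is the number of edges, and
`K_{δ,n-δ}` has `δ (n - δ)` edges while `G₁` has only `n δ / 2 + n / (δ + 1) - 1`; so once `n` is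
large, `G₁` wins for all large `q`. Concretely, write `n = (δ + 1)(m + 1)`, `b = n - δ` and
`t = 1 / q`. Splitting the colorings of `K_{δ,b}` according to whether the `δ`-side is colored
injectively bounds them by `q ^ n ((1 - δt) ^ b + 1 - (1 - δt) ^ δ)`; coloring the star of `G₁`
first and then each clique gives at least `q ^ n (1 - t) ^ m (1 - δt) ^ (δ (m + 1))` colorings.
Bernoulli's inequality, used as `(1 - s) ^ b (1 + b s) ≤ 1` for the first bound and as
`1 - k s ≤ (1 - s) ^ k` for the second, compares the two.
-/

section BernoulliBounds

variable {R : Type*} [CommRing R] [LinearOrder R] [IsStrictOrderedRing R]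

lemma one_sub_mul_le_one_sub_pow {a : R} (ha : a ≤ 2) (n : ℕ) : 1 - n * a ≤ (1 - a) ^ n := by
  simpa [sub_eq_add_neg] using one_add_mul_le_pow (neg_le_neg ha) n

lemma one_sub_add_le_one_sub_pow_mul_one_sub_pow {a b : R} (ha₀ : 0 ≤ a) (ha₁ : a ≤ 1)
    (hb₀ : 0 ≤ b) (hb₁ : b ≤ 1) (j k : ℕ) : 1 - (j * a + k * b) ≤ (1 - a) ^ j * (1 - b) ^ k := by
  have hja : 0 ≤ (j : R) * a := mul_nonneg j.cast_nonneg ha₀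
  have hkb : 0 ≤ (k : R) * b := mul_nonneg k.cast_nonneg hb₀
  by_cases h : (k : R) * b ≤ 1
  · calc 1 - (j * a + k * b) ≤ (1 - j * a) * (1 - k * b) := by nlinarith
      _ ≤ (1 - a) ^ j * (1 - b) ^ k :=
        mul_le_mul (one_sub_mul_le_one_sub_pow (by linarith) j)
          (one_sub_mul_le_one_sub_pow (by linarith) k) (by linarith)
          (pow_nonneg (by linarith) j)
  · have : 0 ≤ (1 - a) ^ j * (1 - b) ^ k := by
      have := sub_nonneg.2 ha₁; have := sub_nonneg.2 hb₁; positivity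
    linarith

lemma one_sub_pow_mul_one_add_mul_le_one {s : R} (hs₀ : 0 ≤ s) (hs₁ : s ≤ 1) (n : ℕ) :
    (1 - s) ^ n * (1 + n * s) ≤ 1 :=
  calc (1 - s) ^ n * (1 + n * s) ≤ (1 - s) ^ n * (1 + s) ^ n :=
        mul_le_mul_of_nonneg_left (one_add_mul_le_pow (by linarith) n)
          (pow_nonneg (by linarith) n)
    _ = (1 - s ^ 2) ^ n := by rw [← mul_pow]; ring
    _ ≤ 1 := pow_le_one₀ (by nlinarith) (by nlinarith)

lemma one_sub_pow_lt_one_sub {s u : R} (hs₀ : 0 ≤ s) (hs₁ : s ≤ 1) {n : ℕ}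
    (h : u * (1 + n * s) < n * s) : (1 - s) ^ n < 1 - u := by
  have hpos : 0 < 1 + n * s := by have := mul_nonneg n.cast_nonneg hs₀; linarith
  refine lt_of_mul_lt_mul_right ?_ hpos.le
  calc (1 - s) ^ n * (1 + n * s) ≤ 1 := one_sub_pow_mul_one_add_mul_le_one hs₀ hs₁ n
    _ < (1 - u) * (1 + n * s) := by linarith

end BernoulliBounds

/- `c` dominates the coefficient of `t` on both sides; `c + 1 ≤ b δ` is where the edge count of
`K_{δ,b}` exceeding that of `G₁` enters. -/
lemma one_sub_pow_add_lt_one_sub_pow_mul_one_sub_pow {δ m b : ℕ} {c t : ℝ} (ht : 0 < t)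
    (hδt : δ * t ≤ 1) (hc : m + δ ^ 2 * (m + 1) + δ ^ 2 ≤ c) (hgap : c + 1 ≤ b * δ)
    (hsmall : b * δ * c * t < 1) :
    (1 - δ * t) ^ b + (1 - (1 - δ * t) ^ δ) < (1 - t) ^ m * (1 - δ * t) ^ (δ * (m + 1)) := by
  have hδt₀ : 0 ≤ (δ : ℝ) * t := by positivity
  have hbipartite : (1 - δ * t) ^ b < 1 - c * t := by
    refine one_sub_pow_lt_one_sub hδt₀ hδt ?_
    nlinarith
  have hclique : 1 - δ * (δ * t) ≤ (1 - δ * t) ^ δ := one_sub_mul_le_one_sub_pow (by linarith) δ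
  have hδ : (1 : ℝ) ≤ δ := by
    rcases Nat.eq_zero_or_pos δ with rfl | hδ
    · simp only [Nat.cast_zero, mul_zero] at hgap hc
      nlinarith [m.cast_nonneg (α := ℝ)]
    · exact_mod_cast hδ
  have hG1 :=
    one_sub_add_le_one_sub_pow_mul_one_sub_pow ht.le (by nlinarith) hδt₀ hδt m (δ * (m + 1))
  push_cast at hG1
  nlinarith

section SuccAboveCons

variable {n q : ℕ}

def succAboveCons (c : Fin (q + 1)) (f : Fin n → Fin q) : Fin (n + 1) → Fin (q + 1) :=
  Fin.cons c (c.succAbove ∘ f)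

lemma succAboveCons_ne_of_ne_zero (c : Fin (q + 1)) (f : Fin n → Fin q) {i : Fin (n + 1)}
    (hi : i ≠ 0) : succAboveCons c f i ≠ c := by
  obtain ⟨j, rfl⟩ := Fin.exists_succ_eq.2 hi
  exact Fin.succAbove_ne c (f j)

lemma succAboveCons_injective {c : Fin (q + 1)} {f : Fin n → Fin q}
    (hf : Function.Injective f) : Function.Injective (succAboveCons c f) :=
  Fin.cons_injective_of_injective (by rintro ⟨i, hi⟩; exact Fin.succAbove_ne c (f i) hi)
    ((Fin.succAbove_right_injective).comp hf)

lemma succAboveCons_inj {c c' : Fin (q + 1)} {f f' : Fin n → Fin q} :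
    succAboveCons c f = succAboveCons c' f' ↔ c = c' ∧ f = f' := by
  refine ⟨fun h => ?_, by rintro ⟨rfl, rfl⟩; rfl⟩
  obtain ⟨rfl, h⟩ := Fin.cons_inj.1 h
  exact ⟨rfl, Fin.succAbove_right_injective.comp_left h⟩

end SuccAboveCons

lemma ne_of_G1_adj {m δ : ℕ} {β : Type*} {f : Fin (m + 1) × Fin (δ + 1) → β}
    (hrow : ∀ a, Function.Injective fun i => f (a, i)) (hstar : ∀ a ≠ 0, f (a, 0) ≠ f (0, 0))
    ⦃x y : Fin (m + 1) × Fin (δ + 1)⦄ (hxy : (G1 (m + 1) δ).Adj x y) : f x ≠ f y := by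
  obtain ⟨a, i⟩ := x
  obtain ⟨b, j⟩ := y
  rw [G1, SimpleGraph.fromRel_adj] at hxy
  obtain ⟨hne, (rfl | ⟨rfl, rfl, ha⟩) | (rfl | ⟨rfl, rfl, hb⟩)⟩ := hxy
  · exact (hrow a).ne (by rintro rfl; exact hne rfl)
  · obtain rfl : a = 0 := Fin.ext ha
    exact (hstar b (by rintro rfl; exact hne rfl)).symm
  · exact (hrow b).ne (by rintro rfl; exact hne rfl)
  · obtain rfl : b = 0 := Fin.ext hb
    exact hstar a (by rintro rfl; exact hne rfl)

def G1Coloring {m δ q : ℕ} (c : Fin (q + 1)) (s : Fin m → Fin q)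
    (g : Fin (m + 1) → Fin δ ↪ Fin q) : Fin (m + 1) × Fin (δ + 1) → Fin (q + 1) :=
  fun x => succAboveCons (succAboveCons c s x.1) (g x.1) x.2

lemma G1Coloring_inj {m δ q : ℕ} {c c' : Fin (q + 1)} {s s' : Fin m → Fin q}
    {g g' : Fin (m + 1) → Fin δ ↪ Fin q} :
    G1Coloring c s g = G1Coloring c' s' g' ↔ c = c' ∧ s = s' ∧ g = g' := by
  refine ⟨fun h => ?_, by rintro ⟨rfl, rfl, rfl⟩; rfl⟩
  have hrow (a : Fin (m + 1)) :
      succAboveCons (succAboveCons c s a) (g a) = succAboveCons (succAboveCons c' s' a) (g' a) :=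
    funext fun i => congrFun h (a, i)
  obtain ⟨rfl, rfl⟩ := succAboveCons_inj.1 (funext fun a => (succAboveCons_inj.1 (hrow a)).1)
  exact ⟨rfl, rfl, funext fun a => DFunLike.coe_injective (succAboveCons_inj.1 (hrow a)).2⟩

lemma G1Coloring_adj_ne {m δ q : ℕ} (c : Fin (q + 1)) (s : Fin m → Fin q)
    (g : Fin (m + 1) → Fin δ ↪ Fin q) ⦃x y : Fin (m + 1) × Fin (δ + 1)⦄
    (hxy : (G1 (m + 1) δ).Adj x y) : G1Coloring c s g x ≠ G1Coloring c s g y :=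
  ne_of_G1_adj (fun a => succAboveCons_injective (g a).injective)
    (fun _ ha => succAboveCons_ne_of_ne_zero c s ha) hxy

lemma mul_pow_mul_descFactorial_pow_le_homCount_G1 (m δ q : ℕ) :
    (q + 1) * q ^ m * q.descFactorial δ ^ (m + 1) ≤
      homCount (G1 (m + 1) δ) (fun a b : Fin (q + 1) => a ≠ b) := by
  have hcard : Nat.card (Fin (q + 1) × (Fin m → Fin q) × (Fin (m + 1) → Fin δ ↪ Fin q)) =
      (q + 1) * q ^ m * q.descFactorial δ ^ (m + 1) := by
    simp [Nat.card_eq_fintype_card, Fintype.card_embedding_eq, mul_assoc]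
  rw [← hcard]
  refine Nat.card_le_card_of_injective
    (fun p => ⟨G1Coloring p.1 p.2.1 p.2.2, G1Coloring_adj_ne _ _ _⟩) fun ⟨_, _, _⟩ ⟨_, _, _⟩ h => by
      obtain ⟨rfl, rfl, rfl⟩ := G1Coloring_inj.1 (congrArg Subtype.val h)
      rfl

lemma card_fun_compl_range {α β γ : Type*} [Fintype α] [Finite β] [Fintype γ] (g : α ↪ γ) :
    Nat.card (β → {c // c ∉ Set.range g}) = (Fintype.card γ - Fintype.card α) ^ Nat.card β := by
  classical
  rw [Nat.card_fun, Nat.card_eq_fintype_card, Fintype.card_subtype_compl,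
    Set.card_range_of_injective g.injective]

lemma homCount_completeBipartite_le (δ b q : ℕ) :
    homCount (completeBipartiteGraph (Fin δ) (Fin b)) (fun x y : Fin q => x ≠ y) ≤
      q.descFactorial δ * (q - δ) ^ b + (q ^ δ - q.descFactorial δ) * q ^ b := by
  classical
  let Inj := Σ g : Fin δ ↪ Fin q, Fin b → {c // c ∉ Set.range g}
  let NonInj := {g : Fin δ → Fin q // ¬ Function.Injective g} × (Fin b → Fin q)
  have hInj : Nat.card Inj = q.descFactorial δ * (q - δ) ^ b := by
    rw [Nat.card_sigma, Fintype.sum_congr _ _ fun g => card_fun_compl_range (β := Fin b) g]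
    simp [Fintype.card_embedding_eq]
  have hNonInj : Nat.card NonInj = (q ^ δ - q.descFactorial δ) * q ^ b := by
    rw [Nat.card_prod, Nat.card_eq_fintype_card, Fintype.card_subtype_compl,
      Fintype.card_congr (Equiv.subtypeInjectiveEquivEmbedding _ _)]
    simp [Fintype.card_embedding_eq]
  let split : {f : Fin δ ⊕ Fin b → Fin q //
      ∀ ⦃u v⦄, (completeBipartiteGraph (Fin δ) (Fin b)).Adj u v → f u ≠ f v} → Inj ⊕ NonInj :=
    fun f => if h : Function.Injective (f.1 ∘ Sum.inl) then
      .inl ⟨⟨_, h⟩, fun j => ⟨f.1 (.inr j), fun ⟨i, hi⟩ => f.2 (by simp) hi⟩⟩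
    else .inr (⟨_, h⟩, f.1 ∘ Sum.inr)
  let join : Inj ⊕ NonInj → (Fin δ ⊕ Fin b → Fin q)
    | .inl ⟨g, h⟩ => Sum.elim g fun j => h j
    | .inr (g, h) => Sum.elim g h
  have hjoin : ∀ f, join (split f) = f.1 := by
    intro f
    by_cases h : Function.Injective (f.1 ∘ Sum.inl) <;>
      simp only [split, h, dif_pos, dif_neg, not_false_iff, join] <;>
      funext x <;> cases x <;> rfl
  rw [homCount, ← hInj, ← hNonInj, ← Nat.card_sum]
  exact Nat.card_le_card_of_injective split fun f f' h => Subtype.ext (by rw [← hjoin, h, hjoin])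

lemma sub_pow_eq_pow_mul_one_sub_pow {K : Type*} [Field K] {x : K} (hx : x ≠ 0) (a : K)
    (k : ℕ) : (x - a) ^ k = x ^ k * (1 - a * x⁻¹) ^ k := by
  rw [← mul_pow, mul_sub, mul_one, mul_left_comm, mul_inv_cancel₀ hx, mul_one]

lemma cast_homCount_completeBipartite_le (δ b q : ℕ) (hδq : δ ≤ q) (hq : 0 < q) :
    (homCount (completeBipartiteGraph (Fin δ) (Fin b)) (fun x y : Fin q => x ≠ y) : ℝ) ≤
      (q : ℝ) ^ (δ + b) * ((1 - δ * (q : ℝ)⁻¹) ^ b + (1 - (1 - δ * (q : ℝ)⁻¹) ^ δ)) := by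
  have hsub : (q - δ) ^ δ ≤ q.descFactorial δ :=
    (Nat.pow_le_pow_left (by omega) δ).trans (Nat.pow_sub_le_descFactorial q δ)
  have h := (homCount_completeBipartite_le δ b q).trans <| add_le_add
    (Nat.mul_le_mul_right _ (Nat.descFactorial_le_pow q δ))
    (Nat.mul_le_mul_right _ (Nat.sub_le_sub_left hsub _))
  have hpow : (q - δ) ^ δ ≤ q ^ δ := Nat.pow_le_pow_left (Nat.sub_le q δ) δ
  have hx : (q : ℝ) ≠ 0 := by positivity
  calc _ ≤ ((q ^ δ * (q - δ) ^ b + (q ^ δ - (q - δ) ^ δ) * q ^ b : ℕ) : ℝ) := by exact_mod_cast h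
    _ = _ := by
      rw [Nat.cast_add, Nat.cast_mul, Nat.cast_mul, Nat.cast_sub hpow]
      push_cast [Nat.cast_sub hδq]
      rw [sub_pow_eq_pow_mul_one_sub_pow hx, sub_pow_eq_pow_mul_one_sub_pow hx]
      ring

lemma le_cast_homCount_G1 (m δ q : ℕ) (hδq : δ ≤ q + 1) :
    ((q + 1 : ℕ) : ℝ) ^ ((δ + 1) * (m + 1)) *
        ((1 - ((q + 1 : ℕ) : ℝ)⁻¹) ^ m * (1 - δ * ((q + 1 : ℕ) : ℝ)⁻¹) ^ (δ * (m + 1))) ≤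
      homCount (G1 (m + 1) δ) (fun a b : Fin (q + 1) => a ≠ b) := by
  have h := (Nat.mul_le_mul_left _ (Nat.pow_le_pow_left (Nat.pow_sub_le_descFactorial q δ) _)).trans
    (mul_pow_mul_descFactorial_pow_le_homCount_G1 m δ q)
  set x : ℝ := ((q + 1 : ℕ) : ℝ) with hxdef
  have hx : x ≠ 0 := by positivity
  have hcast : (((q + 1) * q ^ m * ((q + 1 - δ) ^ δ) ^ (m + 1) : ℕ) : ℝ) =
      x * (x - 1) ^ m * ((x - δ) ^ δ) ^ (m + 1) := by
    rw [hxdef]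
    push_cast [Nat.cast_sub hδq]
    ring
  calc _ = x * (x - 1) ^ m * ((x - δ) ^ δ) ^ (m + 1) := by
        rw [sub_pow_eq_pow_mul_one_sub_pow hx, sub_pow_eq_pow_mul_one_sub_pow hx, one_mul]
        ring
    _ ≤ _ := by rw [← hcast]; exact_mod_cast h

/-- Fix `δ ≥ 2`.  There exists `N` such that for every `n ≥ N` divisible by `δ+1` there exists
`Q` such that for all `q ≥ Q`, the complete bipartite graph `K_{δ,n-δ}` has strictly fewer
proper `q`-colorings than the graph `G₁`. -/
theorem completeBipartite_lt_G1_colorings (δ : ℕ) (hδ : 2 ≤ δ) :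
    ∃ N : ℕ, ∀ n : ℕ, N ≤ n → (δ + 1) ∣ n →
      ∃ Q : ℕ, ∀ q : ℕ, Q ≤ q →
        homCount (completeBipartiteGraph (Fin δ) (Fin (n - δ))) (fun a b : Fin q => a ≠ b) <
          homCount (G1 (n / (δ + 1)) δ) (fun a b : Fin q => a ≠ b) := by
  refine ⟨(δ + 1) * (2 * δ ^ 2 + 1), fun n hn ⟨M, hnM⟩ => ?_⟩
  subst hnM
  have hM : 2 * δ ^ 2 + 1 ≤ M := Nat.le_of_mul_le_mul_left hn (Nat.succ_pos δ)
  obtain ⟨m, rfl⟩ : ∃ m, M = m + 1 := ⟨M - 1, by omega⟩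
  rw [Nat.mul_div_cancel_left _ (Nat.succ_pos δ)]
  obtain ⟨b, hb⟩ : ∃ b, b = (δ + 1) * (m + 1) - δ := ⟨_, rfl⟩
  have hnb : (δ + 1) * (m + 1) = δ + b := by rw [hb]; ring_nf; omega
  rw [← hb]
  set c := m + δ ^ 2 * (m + 1) + δ ^ 2 with hc
  have hgap : c + 1 ≤ b * δ := by
    have hb' : b = δ * m + m + 1 := by linarith
    subst hb'
    nlinarith
  refine ⟨b * δ * c + δ + 1, fun q hq => ?_⟩
  obtain ⟨p, rfl⟩ : ∃ p, q = p + 1 := ⟨q - 1, by omega⟩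
  have hx : (0 : ℝ) < (p + 1 : ℕ) := by positivity
  have key := one_sub_pow_add_lt_one_sub_pow_mul_one_sub_pow (δ := δ) (m := m) (b := b) (c := c)
    (inv_pos.2 hx)
    (by rw [← div_eq_mul_inv, div_le_one hx]; exact_mod_cast (by omega : δ ≤ p + 1))
    (by simp [hc]) (by exact_mod_cast hgap)
    (by rw [← div_eq_mul_inv, div_lt_one hx]; exact_mod_cast (by omega : b * δ * c < p + 1))
  have upper := cast_homCount_completeBipartite_le δ b (p + 1) (by omega) (by omega)
  have lower := le_cast_homCount_G1 m δ p (by omega)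
  rw [← hnb] at upper
  exact_mod_cast (upper.trans_lt (mul_lt_mul_of_pos_left key (pow_pos hx _))).trans_le lower
end

section
/- Fix a natural number δ. For every finite connected non-regular graph H (loops allowed) there exists a constant ℓ > δ (depending on δ and H) such that for all k ≥ ℓ, hom(P_k, H) < Δ^{k−δ}, where Δ is the maximum degree of H. -/
/-- The degree of a vertex in a graph with loops allowed (a loop adds one to the degree). -/
noncomputable def relDegree {β : Type*} (H : β → β → Prop) (v : β) : ℕ :=
  Nat.card {w : β // H v w}

/-- The maximum degree of a finite graph with loops allowed. -/
noncomputable def relMaxDegree {β : Type*} [Fintype β] (H : β → β → Prop) : ℕ :=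
  Finset.univ.sup fun v => relDegree H v

/-!
Let `Δ` be the maximum degree and `v` a vertex of degree less than `Δ`. A vertex from which some
`n`-step walk count falls below `Δ ^ n` passes this deficit on to its neighbours, so following
paths to `v` there is one `m` such that every vertex starts fewer than `Δ ^ m` walks of `m` steps.
Cutting a walk of `n = r + a * m` steps into blocks of `m` steps bounds the number of walks by
`|V(H)| * Δ ^ r * (Δ ^ m - 1) ^ a`, and `((Δ ^ m - 1) / Δ ^ m) ^ a` decays geometrically, which
eventually beats the fixed factor `Δ ^ δ`.
-/

open Filter Finset

section Walks

variable {β : Type*} [Fintype β] (H : β → β → Prop)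

open Classical in
noncomputable def relNeighborFinset (v : β) : Finset β := {w | H v w}

theorem mem_relNeighborFinset {v w : β} : w ∈ relNeighborFinset H v ↔ H v w := by
  classical
  simp [relNeighborFinset]

theorem card_relNeighborFinset (v : β) : #(relNeighborFinset H v) = relDegree H v := by
  classical
  rw [relDegree, Nat.card_eq_fintype_card, Fintype.card_subtype]
  congr 1

/-- The number of walks with `n` steps starting at `v`. -/
noncomputable def walkCount : ℕ → β → ℕ
  | 0, _ => 1
  | n + 1, v => ∑ w ∈ relNeighborFinset H v, walkCount n w

theorem walkCount_zero (v : β) : walkCount H 0 v = 1 := rfl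

theorem walkCount_succ (n : ℕ) (v : β) :
    walkCount H (n + 1) v = ∑ w ∈ relNeighborFinset H v, walkCount H n w := rfl

theorem walkCount_one (v : β) : walkCount H 1 v = relDegree H v := by
  simp [walkCount_succ, walkCount_zero, card_relNeighborFinset]

variable {H}

theorem walkCount_add_le {m B : ℕ} (hB : ∀ w, walkCount H m w ≤ B) (j : ℕ) (v : β) :
    walkCount H (j + m) v ≤ walkCount H j v * B := by
  induction j generalizing v with
  | zero => simpa [walkCount_zero] using hB v
  | succ j ih =>
    rw [Nat.add_right_comm, walkCount_succ, walkCount_succ, Finset.sum_mul]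
    exact Finset.sum_le_sum fun w _ => ih w

theorem walkCount_add_mul_le {m B : ℕ} (hB : ∀ w, walkCount H m w ≤ B) (r a : ℕ) (v : β) :
    walkCount H (r + a * m) v ≤ walkCount H r v * B ^ a := by
  induction a generalizing v with
  | zero => simp
  | succ a ih =>
    calc walkCount H (r + (a + 1) * m) v = walkCount H (r + a * m + m) v := by ring_nf
      _ ≤ walkCount H (r + a * m) v * B := walkCount_add_le hB _ v
      _ ≤ walkCount H r v * B ^ a * B := Nat.mul_le_mul_right _ (ih v)
      _ = walkCount H r v * B ^ (a + 1) := by ring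

theorem walkCount_le_pow {Δ : ℕ} (hΔ : ∀ w, relDegree H w ≤ Δ) (n : ℕ) (v : β) :
    walkCount H n v ≤ Δ ^ n := by
  simpa [walkCount_zero] using
    walkCount_add_mul_le (m := 1) (fun w => (walkCount_one H w).trans_le (hΔ w)) 0 n v

theorem walkCount_succ_lt_of_adj {Δ n : ℕ} (hΔ : ∀ w, relDegree H w ≤ Δ) {u x : β}
    (hux : H u x) (hx : walkCount H n x < Δ ^ n) : walkCount H (n + 1) u < Δ ^ (n + 1) :=
  calc walkCount H (n + 1) u = ∑ w ∈ relNeighborFinset H u, walkCount H n w := rfl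
    _ < ∑ _w ∈ relNeighborFinset H u, Δ ^ n :=
      Finset.sum_lt_sum (fun w _ => walkCount_le_pow hΔ n w)
        ⟨x, (mem_relNeighborFinset H).2 hux, hx⟩
    _ = relDegree H u * Δ ^ n := by rw [sum_const, smul_eq_mul, card_relNeighborFinset]
    _ ≤ Δ ^ (n + 1) := by rw [pow_succ']; exact Nat.mul_le_mul_right _ (hΔ u)

theorem walkCount_succ_lt_of_lt {Δ n : ℕ} (hΔ : ∀ w, relDegree H w ≤ Δ) (hΔpos : 0 < Δ)
    {u : β} (hu : walkCount H n u < Δ ^ n) : walkCount H (n + 1) u < Δ ^ (n + 1) :=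
  calc walkCount H (n + 1) u ≤ walkCount H n u * Δ :=
        walkCount_add_le (fun w => (walkCount_one H w).trans_le (hΔ w)) n u
    _ < Δ ^ n * Δ := Nat.mul_lt_mul_of_pos_right hu hΔpos
    _ = Δ ^ (n + 1) := (pow_succ Δ n).symm

theorem exists_walkCount_lt_of_reflTransGen {Δ : ℕ} (hΔ : ∀ w, relDegree H w ≤ Δ) {u v : β}
    (hv : relDegree H v < Δ) (huv : Relation.ReflTransGen H u v) :
    ∃ n, walkCount H n u < Δ ^ n := by
  induction huv using Relation.ReflTransGen.head_induction_on with
  | refl => exact ⟨1, by rwa [walkCount_one, pow_one]⟩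
  | head hac _ ih =>
    obtain ⟨n, hn⟩ := ih
    exact ⟨n + 1, walkCount_succ_lt_of_adj hΔ hac hn⟩

theorem eventually_walkCount_lt {Δ : ℕ} (hΔ : ∀ w, relDegree H w ≤ Δ) {u v : β}
    (hv : relDegree H v < Δ) (huv : Relation.ReflTransGen H u v) :
    ∀ᶠ n in atTop, walkCount H n u < Δ ^ n := by
  obtain ⟨n₀, hn₀⟩ := exists_walkCount_lt_of_reflTransGen hΔ hv huv
  exact eventually_atTop.2 ⟨n₀, fun n hn => Nat.le_induction hn₀
    (fun n _ ih => walkCount_succ_lt_of_lt hΔ (by omega) ih) n hn⟩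

end Walks

theorem eventually_mul_pow_lt_pow {B t : ℕ} (hBt : B < t) (K : ℕ) :
    ∀ᶠ a in atTop, K * B ^ a < t ^ a := by
  have ht : (0 : ℝ) < t := by exact_mod_cast (Nat.zero_le B).trans_lt hBt
  have hratio : Tendsto (fun a : ℕ => (K : ℝ) * ((B : ℝ) / t) ^ a) atTop (nhds 0) := by
    simpa using (tendsto_pow_atTop_nhds_zero_of_lt_one (by positivity)
      ((div_lt_one ht).2 (by exact_mod_cast hBt))).const_mul (K : ℝ)
  filter_upwards [hratio.eventually (gt_mem_nhds one_pos)] with a ha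
  rw [div_pow, mul_div_assoc', div_lt_one (pow_pos ht a)] at ha
  exact_mod_cast ha

section Growth

variable {β : Type*} [Fintype β] {H : β → β → Prop}

theorem eventually_mul_sum_walkCount_lt {Δ : ℕ} (hΔ : ∀ w, relDegree H w ≤ Δ) {v : β}
    (hv : relDegree H v < Δ) (hConn : ∀ u, Relation.ReflTransGen H u v) (K : ℕ) :
    ∀ᶠ n in atTop, K * ∑ u, walkCount H n u < Δ ^ n := by
  obtain ⟨m, hm, hmΔ⟩ := ((eventually_gt_atTop 0).and
    (eventually_all.2 fun u => eventually_walkCount_lt hΔ hv (hConn u))).exists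
  -- Every block of `m` steps loses at least one walk, so walks grow like `(Δ ^ m - 1) ^ (n / m)`.
  have hB : ∀ u, walkCount H m u ≤ Δ ^ m - 1 := fun u => Nat.le_sub_one_of_lt (hmΔ u)
  obtain ⟨a₀, ha₀⟩ := eventually_atTop.1
    (eventually_mul_pow_lt_pow (Nat.sub_one_lt (hmΔ v).ne_bot) (K * Fintype.card β))
  filter_upwards [eventually_ge_atTop (a₀ * m)] with n hn
  have hdiv : n % m + n / m * m = n := Nat.mod_add_div' n m
  have hwalk : ∀ u, walkCount H n u ≤ Δ ^ (n % m) * (Δ ^ m - 1) ^ (n / m) := fun u =>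
    calc walkCount H n u = walkCount H (n % m + n / m * m) u := by rw [hdiv]
      _ ≤ walkCount H (n % m) u * (Δ ^ m - 1) ^ (n / m) := walkCount_add_mul_le hB _ _ u
      _ ≤ _ := Nat.mul_le_mul_right _ (walkCount_le_pow hΔ _ u)
  have hpos : 0 < Δ ^ (n % m) := pow_pos (hv.trans_le' (Nat.zero_le _)) _
  calc K * ∑ u, walkCount H n u
      ≤ K * (Fintype.card β * (Δ ^ (n % m) * (Δ ^ m - 1) ^ (n / m))) := by
        gcongr
        rw [← Finset.card_univ, ← smul_eq_mul]
        exact Finset.sum_le_card_nsmul _ _ _ fun u _ => hwalk u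
    _ = Δ ^ (n % m) * (K * Fintype.card β * (Δ ^ m - 1) ^ (n / m)) := by ring
    _ < Δ ^ (n % m) * (Δ ^ m) ^ (n / m) :=
        Nat.mul_lt_mul_of_pos_left (ha₀ _ ((Nat.le_div_iff_mul_le hm).2 hn)) hpos
    _ = Δ ^ n := by rw [← pow_mul, ← pow_add, mul_comm m, hdiv]

end Growth

section PathHoms

variable {β : Type*} [Fintype β] (H : β → β → Prop)

open Classical in
noncomputable def walksFrom (n : ℕ) (v : β) : Finset (Fin (n + 1) → β) :=
  {f | f 0 = v ∧ ∀ i : Fin n, H (f i.castSucc) (f i.succ)}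

theorem mem_walksFrom {n : ℕ} {v : β} {f : Fin (n + 1) → β} :
    f ∈ walksFrom H n v ↔ f 0 = v ∧ ∀ i : Fin n, H (f i.castSucc) (f i.succ) := by
  classical
  simp [walksFrom]

theorem card_walksFrom_le (n : ℕ) (v : β) : #(walksFrom H n v) ≤ walkCount H n v := by
  classical
  induction n generalizing v with
  | zero =>
    refine Finset.card_le_one.2 fun f hf g hg => funext fun i => ?_
    rw [Fin.fin_one_eq_zero i, ((mem_walksFrom H).1 hf).1, ((mem_walksFrom H).1 hg).1]
  | succ n ih =>
    have hsub : walksFrom H (n + 1) v ⊆ (relNeighborFinset H v).biUnion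
        fun w => (walksFrom H n w).image (Fin.cons (α := fun _ => β) v) := by
      intro f hf
      obtain ⟨hf0, hfadj⟩ := (mem_walksFrom H).1 hf
      refine Finset.mem_biUnion.2 ⟨f 1, (mem_relNeighborFinset H).2 (hf0 ▸ hfadj 0),
        Finset.mem_image.2 ⟨Fin.tail f, (mem_walksFrom H).2 ⟨rfl, fun i => ?_⟩, ?_⟩⟩
      · simpa [Fin.tail, ← Fin.succ_castSucc] using hfadj i.succ
      · rw [← hf0, Fin.cons_self_tail]
    calc #(walksFrom H (n + 1) v)
        ≤ ∑ w ∈ relNeighborFinset H v, #((walksFrom H n w).image (Fin.cons (α := fun _ => β) v)) :=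
          (Finset.card_le_card hsub).trans Finset.card_biUnion_le
      _ ≤ ∑ w ∈ relNeighborFinset H v, walkCount H n w :=
          Finset.sum_le_sum fun w _ => Finset.card_image_le.trans (ih w)

theorem homCount_pathGraph_succ_le (n : ℕ) :
    homCount (SimpleGraph.pathGraph (n + 1)) H ≤ ∑ v, walkCount H n v := by
  classical
  have hsub : ({f : Fin (n + 1) → β | ∀ ⦃u v⦄, (SimpleGraph.pathGraph (n + 1)).Adj u v → H (f u) (f v)} : Finset _) ⊆
      Finset.univ.biUnion (walksFrom H n) := fun f hf =>
    Finset.mem_biUnion.2 ⟨f 0, Finset.mem_univ _, (mem_walksFrom H).2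
      ⟨rfl, fun i => (Finset.mem_filter.1 hf).2 (by simp [SimpleGraph.pathGraph_adj])⟩⟩
  calc homCount (SimpleGraph.pathGraph (n + 1)) H
      = #{f : Fin (n + 1) → β | ∀ ⦃u v⦄, (SimpleGraph.pathGraph (n + 1)).Adj u v → H (f u) (f v)} := by
        rw [homCount, Nat.card_eq_fintype_card, Fintype.card_subtype]
    _ ≤ ∑ v, #(walksFrom H n v) := (Finset.card_le_card hsub).trans Finset.card_biUnion_le
    _ ≤ ∑ v, walkCount H n v := Finset.sum_le_sum fun v _ => card_walksFrom_le H n v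

end PathHoms

section MaxDegree

variable {β : Type*} [Fintype β] {H : β → β → Prop}

theorem relDegree_le_relMaxDegree (v : β) : relDegree H v ≤ relMaxDegree H :=
  Finset.le_sup (Finset.mem_univ v)

theorem exists_relDegree_lt_relMaxDegree (h : ∃ v w : β, relDegree H v ≠ relDegree H w) :
    ∃ v, relDegree H v < relMaxDegree H := by
  obtain ⟨v, w, hvw⟩ := h
  rcases hvw.lt_or_gt with hlt | hlt
  · exact ⟨v, hlt.trans_le (relDegree_le_relMaxDegree w)⟩
  · exact ⟨w, hlt.trans_le (relDegree_le_relMaxDegree v)⟩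

end MaxDegree

theorem homCount_pathGraph_lt_general {β : Type*} [Fintype β] (δ : ℕ)
    (H : β → β → Prop)
    (hConn : ∀ u v : β, Relation.ReflTransGen H u v)
    (hNonReg : ∃ v w : β, relDegree H v ≠ relDegree H w) :
    ∃ ℓ : ℕ, δ < ℓ ∧ ∀ k : ℕ, ℓ ≤ k →
      homCount (SimpleGraph.pathGraph k) H < relMaxDegree H ^ (k - δ) := by
  set Δ := relMaxDegree H
  obtain ⟨v, hv⟩ := exists_relDegree_lt_relMaxDegree hNonReg
  obtain ⟨N, hN⟩ := eventually_atTop.1 (eventually_mul_sum_walkCount_lt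
    relDegree_le_relMaxDegree hv (hConn · v) (Δ ^ δ))
  refine ⟨N + δ + 1, by omega, fun k hk => ?_⟩
  obtain ⟨n, rfl⟩ : ∃ n, k = n + 1 := ⟨k - 1, by omega⟩
  refine Nat.lt_of_mul_lt_mul_left (a := Δ ^ δ) ?_
  calc Δ ^ δ * homCount (SimpleGraph.pathGraph (n + 1)) H
      ≤ Δ ^ δ * ∑ u, walkCount H n u := by gcongr; exact homCount_pathGraph_succ_le H n
    _ < Δ ^ n := hN n (by omega)
    _ ≤ Δ ^ (n + 1) := Nat.pow_le_pow_right (hv.trans_le' (Nat.zero_le _)) n.le_succ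
    _ = Δ ^ δ * Δ ^ (n + 1 - δ) := by rw [← pow_add]; congr 1; omega

/-- Fix `δ`.  For every finite connected non-regular graph `H` (loops allowed) there is a
constant `ℓ > δ` such that for all `k ≥ ℓ` we have `hom(P_k, H) < Δ^{k-δ}`, where `Δ` is the
maximum degree of `H`. -/
theorem homCount_pathGraph_lt {β : Type*} [Fintype β] (δ : ℕ)
    (H : β → β → Prop) (hSymm : Symmetric H)
    (hConn : ∀ u v : β, Relation.ReflTransGen H u v)
    (hNonReg : ∃ v w : β, relDegree H v ≠ relDegree H w) :
    ∃ ℓ : ℕ, δ < ℓ ∧ ∀ k : ℕ, ℓ ≤ k →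
      homCount (SimpleGraph.pathGraph k) H < relMaxDegree H ^ (k - δ) :=
  homCount_pathGraph_lt_general δ H hConn hNonReg
end

section
/- Let H be a finite connected non-regular graph (loops allowed) with maximum degree Δ. Then there exist a real constant C > 0 and a real constant λ with 0 ≤ λ < Δ such that hom(P_k, H) ≤ C · λ^k for all k ≥ 1. -/
open Finset

section Aux

variable {β : Type*} [Fintype β] (H : β → β → Prop)

open Classical in
/-- neighbourhood finset -/
noncomputable def nbr (x : β) : Finset β := Finset.univ.filter fun y => H x y

lemma mem_nbr {x y : β} : y ∈ nbr H x ↔ H x y := by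
  classical
  simp [nbr, Finset.filter_congr_decidable]

/-- walk count: number of walks of length m starting at x -/
noncomputable def Wc : ℕ → β → ℕ
  | 0, _ => 1
  | m + 1, x => ∑ y ∈ nbr H x, Wc m y

/-- walks of length m from x, as functions -/
def WalkS (m : ℕ) (x : β) : Type _ :=
  {f : Fin (m + 1) → β // f 0 = x ∧ ∀ i : Fin m, H (f i.castSucc) (f i.succ)}

instance (m : ℕ) (x : β) : Finite (WalkS H m x) := by
  unfold WalkS; infer_instance

end Aux

section Count

variable {β : Type*} [Fintype β] {H : β → β → Prop}

/-- peel the first step of a walk -/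
noncomputable def eStep (m : ℕ) (x : β) :
    WalkS H (m + 1) x ≃ Σ y : {y : β // H x y}, WalkS H m y.1 where
  toFun f := ⟨⟨f.1 1, by
      have h := f.2.2 0
      have h0 : (0 : Fin (m + 1)).castSucc = 0 := rfl
      have h1 : (0 : Fin (m + 1)).succ = 1 := rfl
      rw [h0, h1, f.2.1] at h
      exact h⟩,
    ⟨fun i => f.1 i.succ, rfl, fun i => by
      have h := f.2.2 i.succ
      rwa [← Fin.succ_castSucc] at h⟩⟩
  invFun p := ⟨Fin.cons x p.2.1, Fin.cons_zero _ _, fun i => by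
      induction i using Fin.cases with
      | zero =>
          have h0 : (0 : Fin (m + 1)).castSucc = 0 := rfl
          rw [h0, Fin.cons_zero, Fin.cons_succ, p.2.2.1]
          exact p.1.2
      | succ j =>
          rw [← Fin.succ_castSucc, Fin.cons_succ, Fin.cons_succ]
          exact p.2.2.2 j⟩
  left_inv f := by
    apply Subtype.ext
    funext i
    induction i using Fin.cases with
    | zero => simp [f.2.1]
    | succ j => simp
  right_inv p := by
    obtain ⟨⟨y, hy⟩, g, hg0, hg⟩ := p
    have h1 : (Fin.cons x g : Fin (m+2) → β) 1 = y := by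
      have e : (1 : Fin (m + 2)) = (0 : Fin (m+1)).succ := rfl
      rw [e, Fin.cons_succ, hg0]
    subst h1
    refine Sigma.ext (Subtype.ext rfl) (heq_of_eq (Subtype.ext (funext fun i => ?_)))
    exact Fin.cons_succ (α := fun _ => β) x g i

lemma card_WalkS : ∀ (m : ℕ) (x : β), Nat.card (WalkS H m x) = Wc H m x := by
  intro m
  induction m with
  | zero =>
      intro x
      haveI : Unique (WalkS H 0 x) :=
        { default := ⟨fun _ => x, rfl, fun i => i.elim0⟩
          uniq := fun f => Subtype.ext (funext fun i => by
            have hi : i = 0 := Fin.ext (Nat.lt_one_iff.mp i.isLt)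
            rw [hi, f.2.1]) }
      rw [Nat.card_unique]
      rfl
  | succ m ih =>
      intro x
      classical
      rw [Nat.card_congr (eStep m x)]
      letI : ∀ y : {y : β // H x y}, Fintype (WalkS H m y.1) := fun y => Fintype.ofFinite _
      rw [Nat.card_eq_fintype_card, Fintype.card_sigma]
      have : ∀ y : {y : β // H x y}, Fintype.card (WalkS H m y.1) = Wc H m y.1 := by
        intro y; rw [← Nat.card_eq_fintype_card]; exact ih y.1
      rw [Finset.sum_congr rfl (fun y _ => this y)]
      rw [show Wc H (m+1) x = ∑ y ∈ nbr H x, Wc H m y from rfl]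
      exact (Finset.sum_subtype (nbr H x) (fun y => mem_nbr H) (Wc H m)).symm

end Count

section Bound

variable {β : Type*} [Fintype β] {H : β → β → Prop}

/-- reachability in exactly d steps -/
def ReachIn (H : β → β → Prop) (u0 : β) : ℕ → β → Prop
  | 0, x => x = u0
  | d + 1, x => ∃ y, H x y ∧ ReachIn H u0 d y

lemma Wc_le_pow {Δ : ℕ} (hmax : ∀ x, (nbr H x).card ≤ Δ) : ∀ m x, Wc H m x ≤ Δ ^ m := by
  intro m
  induction m with
  | zero => intro x; simp [Wc]
  | succ m ih =>
      intro x
      calc Wc H (m+1) x = ∑ y ∈ nbr H x, Wc H m y := rfl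
        _ ≤ ∑ _y ∈ nbr H x, Δ ^ m := Finset.sum_le_sum fun y _ => ih y
        _ = (nbr H x).card * Δ ^ m := by rw [Finset.sum_const, smul_eq_mul]
        _ ≤ Δ * Δ ^ m := Nat.mul_le_mul_right _ (hmax x)
        _ = Δ ^ (m+1) := by rw [pow_succ]; ring

lemma Wc_claim2 {Δ : ℕ} {u0 : β} (hmax : ∀ x, (nbr H x).card ≤ Δ)
    (hu0 : (nbr H u0).card + 1 ≤ Δ) :
    ∀ d m x, ReachIn H u0 d x → d < m → Wc H m x + Δ ^ (m - d - 1) ≤ Δ ^ m := by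
  classical
  intro d
  induction d with
  | zero =>
      intro m x hx hm
      obtain ⟨m, rfl⟩ : ∃ m', m = m' + 1 := ⟨m - 1, by omega⟩
      have hx' : x = u0 := hx
      subst hx'
      have he : m + 1 - 0 - 1 = m := by omega
      rw [he]
      have h1 : Wc H (m+1) x ≤ (nbr H x).card * Δ ^ m :=
        calc Wc H (m+1) x = ∑ y ∈ nbr H x, Wc H m y := rfl
          _ ≤ ∑ _y ∈ nbr H x, Δ ^ m := Finset.sum_le_sum fun y _ => Wc_le_pow hmax m y
          _ = (nbr H x).card * Δ ^ m := by rw [Finset.sum_const, smul_eq_mul]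
      calc Wc H (m+1) x + Δ ^ m ≤ (nbr H x).card * Δ ^ m + Δ ^ m := by omega
        _ = ((nbr H x).card + 1) * Δ ^ m := by ring
        _ ≤ Δ * Δ ^ m := Nat.mul_le_mul_right _ hu0
        _ = Δ ^ (m+1) := by rw [pow_succ]; ring
  | succ d ih =>
      intro m x hx hm
      obtain ⟨m, rfl⟩ : ∃ m', m = m' + 1 := ⟨m - 1, by omega⟩
      obtain ⟨y, hxy, hy⟩ := hx
      have hdm : d < m := by omega
      have hIH := ih m y hy hdm
      have hmem : y ∈ nbr H x := (mem_nbr H).mpr hxy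
      have he : m + 1 - (d + 1) - 1 = m - d - 1 := by omega
      rw [he]
      have hsplit : Wc H m y + ∑ z ∈ (nbr H x).erase y, Wc H m z = Wc H (m+1) x :=
        Finset.add_sum_erase _ _ hmem
      have herase : ∑ z ∈ (nbr H x).erase y, Wc H m z ≤ ((nbr H x).erase y).card * Δ ^ m :=
        calc ∑ z ∈ (nbr H x).erase y, Wc H m z ≤ ∑ _z ∈ (nbr H x).erase y, Δ ^ m :=
              Finset.sum_le_sum fun z _ => Wc_le_pow hmax m z
          _ = ((nbr H x).erase y).card * Δ ^ m := by rw [Finset.sum_const, smul_eq_mul]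
      have hcard : ((nbr H x).erase y).card + 1 = (nbr H x).card :=
        Finset.card_erase_add_one hmem
      calc Wc H (m+1) x + Δ ^ (m - d - 1)
          = (Wc H m y + Δ ^ (m - d - 1)) + ∑ z ∈ (nbr H x).erase y, Wc H m z := by omega
        _ ≤ Δ ^ m + ((nbr H x).erase y).card * Δ ^ m := by omega
        _ = (((nbr H x).erase y).card + 1) * Δ ^ m := by ring
        _ = (nbr H x).card * Δ ^ m := by rw [hcard]
        _ ≤ Δ * Δ ^ m := Nat.mul_le_mul_right _ (hmax x)
        _ = Δ ^ (m+1) := by rw [pow_succ]; ring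

lemma Wc_compose {B m : ℕ} (hB : ∀ y, Wc H m y ≤ B) :
    ∀ a x, Wc H (a + m) x ≤ Wc H a x * B := by
  intro a
  induction a with
  | zero => intro x; simpa [Wc] using hB x
  | succ a ih =>
      intro x
      have he : a + 1 + m = (a + m) + 1 := by omega
      rw [he]
      calc Wc H ((a+m)+1) x = ∑ y ∈ nbr H x, Wc H (a+m) y := rfl
        _ ≤ ∑ y ∈ nbr H x, Wc H a y * B := Finset.sum_le_sum fun y _ => ih y
        _ = (∑ y ∈ nbr H x, Wc H a y) * B := (Finset.sum_mul _ _ _).symm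
        _ = Wc H (a+1) x * B := rfl

end Bound

section Path

variable {β : Type*} [Fintype β] {H : β → β → Prop}

noncomputable def eSigma (H : β → β → Prop) (m : ℕ) :
    {f : Fin (m+1) → β // ∀ i : Fin m, H (f i.castSucc) (f i.succ)} ≃ Σ x : β, WalkS H m x where
  toFun f := ⟨f.1 0, f.1, rfl, f.2⟩
  invFun p := ⟨p.2.1, p.2.2.2⟩
  left_inv f := rfl
  right_inv p := by
    obtain ⟨x, f, h0, hf⟩ := p
    subst h0
    rfl

lemma homCount_path (hSymm : Symmetric H) (m : ℕ) :
    homCount (SimpleGraph.pathGraph (m+1)) H = ∑ x, Wc H m x := by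
  classical
  have e1 : ∀ f : Fin (m+1) → β,
      (∀ ⦃u v⦄, (SimpleGraph.pathGraph (m+1)).Adj u v → H (f u) (f v)) ↔
        (∀ i : Fin m, H (f i.castSucc) (f i.succ)) := by
    intro f
    constructor
    · intro h i
      apply h
      rw [SimpleGraph.pathGraph_adj]
      left
      simp
    · intro h u v huv
      rw [SimpleGraph.pathGraph_adj] at huv
      rcases huv with huv | huv
      · have hvm := v.isLt
        have hu : u.val < m := by omega
        have h1 : u = (⟨u.val, hu⟩ : Fin m).castSucc := Fin.ext rfl
        have h2 : v = (⟨u.val, hu⟩ : Fin m).succ := Fin.ext (by simp; omega)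
        rw [h1, h2]
        exact h _
      · have hum := u.isLt
        have hv : v.val < m := by omega
        have h1 : v = (⟨v.val, hv⟩ : Fin m).castSucc := Fin.ext rfl
        have h2 : u = (⟨v.val, hv⟩ : Fin m).succ := Fin.ext (by simp; omega)
        rw [h1, h2]
        exact hSymm (h _)
  rw [homCount, Nat.card_congr (Equiv.subtypeEquivRight e1), Nat.card_congr (eSigma H m)]
  letI : ∀ x : β, Fintype (WalkS H m x) := fun x => Fintype.ofFinite _
  rw [Nat.card_eq_fintype_card, Fintype.card_sigma]
  exact Finset.sum_congr rfl fun x _ => by rw [← Nat.card_eq_fintype_card]; exact card_WalkS m x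

end Path

lemma nbr_card {β : Type*} [Fintype β] (H : β → β → Prop) (x : β) :
    (nbr H x).card = relDegree H x := by
  classical
  rw [relDegree, Nat.card_eq_fintype_card, Fintype.card_of_subtype (nbr H x) (fun y => mem_nbr H)]

/-- For a finite connected non-regular graph `H` (loops allowed) with maximum degree `Δ`,
there exist real constants `C > 0` and `0 ≤ λ < Δ` with `hom(P_k, H) ≤ C·λ^k` for all
`k ≥ 1`. -/
theorem homCount_pathGraph_le_exp {β : Type*} [Fintype β]
    (H : β → β → Prop) (hSymm : Symmetric H)
    (hConn : ∀ u v : β, Relation.ReflTransGen H u v)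
    (hNonReg : ∃ v w : β, relDegree H v ≠ relDegree H w) :
    ∃ C : ℝ, 0 < C ∧ ∃ lam : ℝ, 0 ≤ lam ∧ lam < (relMaxDegree H : ℝ) ∧
      ∀ k : ℕ, 1 ≤ k →
        (homCount (SimpleGraph.pathGraph k) H : ℝ) ≤ C * lam ^ k := by
  classical
  set Δ := relMaxDegree H with hΔdef
  have hmax : ∀ x, (nbr H x).card ≤ Δ := fun x => by
    rw [nbr_card]; exact Finset.le_sup (Finset.mem_univ x)
  obtain ⟨v, w, hvw⟩ := hNonReg
  have hne : v ≠ w := fun h => hvw (h ▸ rfl)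
  have hdegpos : ∀ x : β, 1 ≤ relDegree H x := by
    intro x
    have hz : ∃ z, z ≠ x := by
      by_cases h : v = x
      · exact ⟨w, fun hw => hne (h.trans hw.symm)⟩
      · exact ⟨v, h⟩
    obtain ⟨z, hz⟩ := hz
    have hxy : ∃ y, H x y := by
      rcases Relation.ReflTransGen.cases_head (hConn x z) with h | ⟨y, hy, _⟩
      · exact absurd h.symm hz
      · exact ⟨y, hy⟩
    obtain ⟨y, hy⟩ := hxy
    haveI : Nonempty {w // H x w} := ⟨⟨y, hy⟩⟩
    exact Nat.card_pos
  have hdegle : ∀ x, relDegree H x ≤ Δ := fun x => Finset.le_sup (Finset.mem_univ x)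
  obtain ⟨u0, hu0lt⟩ : ∃ u0, relDegree H u0 < Δ := by
    rcases lt_or_gt_of_ne hvw with h | h
    · exact ⟨v, lt_of_lt_of_le h (hdegle w)⟩
    · exact ⟨w, lt_of_lt_of_le h (hdegle v)⟩
  have hu0 : (nbr H u0).card + 1 ≤ Δ := by rw [nbr_card]; omega
  have hΔ2 : 2 ≤ Δ := by have := hdegpos u0; omega
  have hreach : ∀ x, ∃ d, ReachIn H u0 d x := by
    intro x
    have h := hConn x u0
    induction h using Relation.ReflTransGen.head_induction_on with
    | refl => exact ⟨0, rfl⟩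
    | head hac _ ih =>
        obtain ⟨d, hd⟩ := ih
        exact ⟨d + 1, _, hac, hd⟩
  choose dfun hdfun using hreach
  set n := Finset.univ.sup dfun + 1 with hn
  have hdn : ∀ x, dfun x < n := fun x => Nat.lt_succ_of_le (Finset.le_sup (Finset.mem_univ x))
  have hn0 : n ≠ 0 := by omega
  have hWn : ∀ x, Wc H n x + 1 ≤ Δ ^ n := by
    intro x
    have h2 := Wc_claim2 hmax hu0 (dfun x) n x (hdfun x) (hdn x)
    have h3 : 1 ≤ Δ ^ (n - dfun x - 1) := Nat.one_le_pow _ _ (by omega)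
    omega
  have hiter : ∀ j r x, Wc H (j * n + r) x ≤ (Δ ^ n - 1) ^ j * Δ ^ r := by
    intro j
    induction j with
    | zero => intro r x; simpa using Wc_le_pow hmax r x
    | succ j ih =>
        intro r x
        have he : (j + 1) * n + r = n + (j * n + r) := by ring
        rw [he]
        calc Wc H (n + (j * n + r)) x ≤ Wc H n x * ((Δ ^ n - 1) ^ j * Δ ^ r) :=
              Wc_compose (fun y => ih r y) n x
          _ ≤ (Δ ^ n - 1) * ((Δ ^ n - 1) ^ j * Δ ^ r) :=
              Nat.mul_le_mul_right _ (by have := hWn x; omega)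
          _ = (Δ ^ n - 1) ^ (j + 1) * Δ ^ r := by rw [pow_succ]; ring
  have hΔR : (2 : ℝ) ≤ (Δ : ℝ) := by exact_mod_cast hΔ2
  have hDn1 : 1 ≤ Δ ^ n - 1 := by
    have h2 : 2 ≤ Δ ^ n := le_trans hΔ2 (Nat.le_self_pow hn0 Δ)
    omega
  set lam : ℝ := ((Δ ^ n - 1 : ℕ) : ℝ) ^ ((n : ℝ)⁻¹) with hlamdef
  have hbase1 : (1 : ℝ) ≤ ((Δ ^ n - 1 : ℕ) : ℝ) := by exact_mod_cast hDn1
  have hlam1 : 1 ≤ lam := Real.one_le_rpow hbase1 (by positivity)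
  have hnR : ((n : ℝ))⁻¹ * (n : ℕ) = 1 := by
    rw [inv_mul_cancel₀]
    exact_mod_cast hn0
  have hlamn : lam ^ n = ((Δ ^ n - 1 : ℕ) : ℝ) := by
    rw [hlamdef, ← Real.rpow_natCast (((Δ ^ n - 1 : ℕ) : ℝ) ^ ((n : ℝ)⁻¹)) n,
      ← Real.rpow_mul (by positivity), hnR, Real.rpow_one]
  have hlamΔ : lam < (Δ : ℝ) := by
    by_contra hc
    push_neg at hc
    have h1 : ((Δ : ℝ)) ^ n ≤ lam ^ n := pow_le_pow_left₀ (by linarith) hc n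
    rw [hlamn] at h1
    have h2 : ((Δ ^ n - 1 : ℕ) : ℝ) < ((Δ ^ n : ℕ) : ℝ) := by
      exact_mod_cast Nat.sub_lt (by positivity) one_pos
    push_cast at h2
    linarith
  have hcard : (0 : ℝ) < (Fintype.card β : ℝ) := by
    exact_mod_cast Fintype.card_pos_iff.mpr ⟨v⟩
  refine ⟨(Fintype.card β : ℝ) * (Δ : ℝ) ^ n,
    mul_pos hcard (pow_pos (by linarith) n), lam, by linarith, hlamΔ, ?_⟩
  intro k hk
  obtain ⟨m, rfl⟩ : ∃ m, k = m + 1 := ⟨k - 1, by omega⟩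
  rw [homCount_path hSymm m]
  set j := m / n with hj
  set r := m % n with hr
  have hm : j * n + r = m := by rw [Nat.mul_comm]; exact Nat.div_add_mod m n
  have hsum : (∑ x, Wc H m x) ≤ Fintype.card β * ((Δ ^ n - 1) ^ j * Δ ^ r) := by
    calc ∑ x, Wc H m x ≤ ∑ _x : β, (Δ ^ n - 1) ^ j * Δ ^ r :=
          Finset.sum_le_sum fun x _ => by
            have h := hiter j r x
            rwa [hm] at h
      _ = Fintype.card β * ((Δ ^ n - 1) ^ j * Δ ^ r) := by
          rw [Finset.sum_const, smul_eq_mul, Finset.card_univ]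
  have hcast : ((∑ x, Wc H m x : ℕ) : ℝ) ≤
      (Fintype.card β : ℝ) * (((Δ ^ n - 1 : ℕ) : ℝ) ^ j * ((Δ : ℝ)) ^ r) := by
    exact_mod_cast hsum
  have hnj : n * j ≤ m + 1 := by
    have h1 : n * j ≤ m := by
      rw [Nat.mul_comm]
      exact hm ▸ Nat.le_add_right _ _
    omega
  have hrn : r ≤ n := le_of_lt (Nat.mod_lt m (by omega))
  calc ((∑ x, Wc H m x : ℕ) : ℝ)
      ≤ (Fintype.card β : ℝ) * (((Δ ^ n - 1 : ℕ) : ℝ) ^ j * ((Δ : ℝ)) ^ r) := hcast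
    _ = (Fintype.card β : ℝ) * (lam ^ (n * j) * ((Δ : ℝ)) ^ r) := by
        rw [pow_mul, hlamn]
    _ ≤ (Fintype.card β : ℝ) * (lam ^ (m + 1) * ((Δ : ℝ)) ^ n) := by
        gcongr <;> linarith
    _ = (Fintype.card β : ℝ) * (Δ : ℝ) ^ n * lam ^ (m + 1) := by ring
end

section
/- Let δ ≥ 2 and n ≥ δ + 1, and let H be a finite connected non-regular graph (loops allowed). Let G be a graph obtained from the complete bipartite graph K_{δ,n−δ} by adding a single new edge joining two vertices that lie in the same part. Then hom(G,H) < hom(K_{δ,n−δ},H). -/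
/-- Let `δ ≥ 2`, `n ≥ δ + 1`, and let `H` be a finite connected non-regular graph (loops
allowed).  If `G` is obtained from `K_{δ,n-δ}` by adding a single edge joining two vertices
`a ≠ b` in the same part (equivalently, two non-adjacent vertices of `K_{δ,n-δ}`), then
`hom(G,H) < hom(K_{δ,n-δ},H)`. -/
theorem homCount_addEdge_lt {β : Type*} [Fintype β]
    (H : β → β → Prop) (hSymm : Symmetric H)
    (hConn : ∀ u v : β, Relation.ReflTransGen H u v)
    (hNonReg : ∃ v w : β, relDegree H v ≠ relDegree H w)
    (δ n : ℕ) (hδ : 2 ≤ δ) (hn : δ + 1 ≤ n)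
    (a b : Fin δ ⊕ Fin (n - δ)) (hab : a ≠ b)
    (hSamePart : ¬ (completeBipartiteGraph (Fin δ) (Fin (n - δ))).Adj a b)
    (G : SimpleGraph (Fin δ ⊕ Fin (n - δ)))
    (hG : ∀ x y, G.Adj x y ↔
      (completeBipartiteGraph (Fin δ) (Fin (n - δ))).Adj x y ∨
        (x = a ∧ y = b) ∨ (x = b ∧ y = a)) :
    homCount G H < homCount (completeBipartiteGraph (Fin δ) (Fin (n - δ))) H := by
  classical
  -- Step 1: there exist adjacent vertices with distinct degrees
  have hstep : ∃ u v : β, H u v ∧ relDegree H u < relDegree H v := by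
    by_contra h
    push_neg at h
    have hle : ∀ u v, H u v → relDegree H u = relDegree H v := fun u v huv =>
      le_antisymm (h v u (hSymm huv)) (h u v huv)
    obtain ⟨v0, w0, hne⟩ := hNonReg
    have hall : ∀ x y : β, Relation.ReflTransGen H x y →
        relDegree H x = relDegree H y := by
      intro x y hxy
      induction hxy with
      | refl => rfl
      | tail _ h ih => exact ih.trans (hle _ _ h)
    exact hne (hall _ _ (hConn v0 w0))
  obtain ⟨u, v, huv, hdeg⟩ := hstep
  -- Step 2: find c adjacent to v but not to u
  have hc : ∃ c, H v c ∧ ¬ H u c := by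
    by_contra h
    push_neg at h
    have hcard : ∀ x : β, relDegree H x = (Finset.univ.filter (H x)).card := by
      intro x
      rw [relDegree, Nat.card_eq_fintype_card, Fintype.card_subtype]
    have : relDegree H v ≤ relDegree H u := by
      rw [hcard, hcard]
      apply Finset.card_le_card
      intro c hcmem
      simp only [Finset.mem_filter, Finset.mem_univ, true_and] at *
      exact h c hcmem
    omega
  obtain ⟨c, hvc, huc⟩ := hc
  -- Key counting step: a K-coloring violating the extra edge gives strict inequality
  have key : ∀ f0 : Fin δ ⊕ Fin (n - δ) → β,
      (∀ ⦃x y⦄, (completeBipartiteGraph (Fin δ) (Fin (n - δ))).Adj x y →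
        H (f0 x) (f0 y)) →
      ¬ H (f0 a) (f0 b) →
      homCount G H < homCount (completeBipartiteGraph (Fin δ) (Fin (n - δ))) H := by
    intro f0 hf0 hf0ab
    have hGab : G.Adj a b := (hG a b).mpr (Or.inr (Or.inl ⟨rfl, rfl⟩))
    have hsub : {f : Fin δ ⊕ Fin (n - δ) → β |
          ∀ ⦃x y⦄, G.Adj x y → H (f x) (f y)} ⊂
        {f : Fin δ ⊕ Fin (n - δ) → β |
          ∀ ⦃x y⦄, (completeBipartiteGraph (Fin δ) (Fin (n - δ))).Adj x y →
            H (f x) (f y)} := by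
      constructor
      · intro f hf x y hxy
        exact hf ((hG x y).mpr (Or.inl hxy))
      · intro hsup
        exact hf0ab (hsup hf0 hGab)
    have hlt := Set.ncard_lt_ncard hsub (Set.toFinite _)
    unfold homCount
    rw [← Nat.card_coe_set_eq, ← Nat.card_coe_set_eq] at hlt
    exact hlt
  -- Step 3: construct the coloring by cases on which part a and b lie in
  rcases a with a' | a' <;> rcases b with b' | b'
  · -- both in the left part
    have hab' : a' ≠ b' := fun h => hab (by rw [h])
    refine key (Sum.elim (fun x => if x = b' then c else u) (fun _ => v)) ?_ ?_
    · intro x y hxy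
      rcases x with x | x <;> rcases y with y | y
      · simp at hxy
      · simp only [Sum.elim_inl, Sum.elim_inr]
        split_ifs
        · exact hSymm hvc
        · exact huv
      · simp only [Sum.elim_inr, Sum.elim_inl]
        split_ifs
        · exact hvc
        · exact hSymm huv
      · simp at hxy
    · simp only [Sum.elim_inl, if_neg hab', if_pos rfl]
      exact huc
  · exact absurd (by simp) hSamePart
  · exact absurd (by simp) hSamePart
  · -- both in the right part
    have hab' : a' ≠ b' := fun h => hab (by rw [h])
    refine key (Sum.elim (fun _ => v) (fun x => if x = b' then c else u)) ?_ ?_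
    · intro x y hxy
      rcases x with x | x <;> rcases y with y | y
      · simp at hxy
      · simp only [Sum.elim_inl, Sum.elim_inr]
        split_ifs
        · exact hvc
        · exact hSymm huv
      · simp only [Sum.elim_inr, Sum.elim_inl]
        split_ifs
        · exact hSymm hvc
        · exact huv
      · simp at hxy
    · simp only [Sum.elim_inr, if_neg hab', if_pos rfl]
      exact huc
end

section
/- Let δ ≥ 2, let n be divisible by δ+1 with n ≥ δ+1, and let q ≥ δ+1. Then the number of proper q-colorings of G_1 satisfies hom(G_1, K_q) = q(q−1)⋯(q−δ) · [(q−1)·(q−1)(q−2)⋯(q−δ)]^{n/(δ+1)−1}, i.e., hom(G_1,K_q) = (∏_{i=0}^{δ}(q−i)) · ((q−1)·∏_{i=1}^{δ}(q−i))^{n/(δ+1)−1}. -/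
/-!
The central clique can be colored in `q(q-1)⋯(q-δ)` ways. Once it is colored, the other cliques
are independent of each other: in each, the specified vertex must avoid the color of the center
(`q-1` choices) and the remaining `δ` vertices receive distinct colors different from that of the
specified vertex (`(q-1)(q-2)⋯(q-δ)` choices).
-/

open Function Finset

section Embedding

variable {α : Type*} {k : ℕ}

def Function.Embedding.finSuccEquivOfApplyZero (c : α) :
    {e : Fin (k + 1) ↪ α // e 0 = c} ≃ (Fin k ↪ {x // x ≠ c}) where
  toFun e := ⟨fun j => ⟨e.1 j.succ,
      fun h => Fin.succ_ne_zero j (e.1.injective (h.trans e.2.symm))⟩,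
    fun _ _ h => Fin.succ_injective _ (e.1.injective (congrArg Subtype.val h))⟩
  invFun e := ⟨⟨Fin.cons c fun j => e j, Fin.cons_injective_iff.2
      ⟨fun ⟨j, hj⟩ => (e j).2 hj, Subtype.val_injective.comp e.injective⟩⟩, rfl⟩
  left_inv e := by
    ext j
    cases j using Fin.cases
    · exact e.2.symm
    · rfl
  right_inv _ := rfl

variable [Fintype α] [DecidableEq α]

theorem Fintype.card_embedding_fin_succ_apply_zero_eq (c : α) :
    card {e : Fin (k + 1) ↪ α // e 0 = c} = (card α - 1).descFactorial k := by
  rw [card_congr (Embedding.finSuccEquivOfApplyZero c), card_embedding_eq, card_fin,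
    card_subtype_compl, card_subtype_eq]

theorem Fintype.card_embedding_fin_succ_apply_zero_ne (c : α) :
    card {e : Fin (k + 1) ↪ α // e 0 ≠ c} = (card α - 1) * (card α - 1).descFactorial k := by
  obtain ⟨p, hp⟩ : ∃ p, card α = p + 1 := Nat.exists_eq_add_one.2 (card_pos_iff.2 ⟨c⟩)
  rw [card_subtype_compl, card_embedding_fin_succ_apply_zero_eq, card_embedding_eq, card_fin, hp,
    Nat.succ_descFactorial_succ, Nat.add_sub_cancel, add_one_mul, Nat.add_sub_cancel]

end Embedding

section G1

variable {k δ : ℕ} {β : Type*}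

theorem G1_coloring_iff (f : Fin (k + 1) × Fin (δ + 1) → β) :
    (∀ ⦃u v⦄, (G1 (k + 1) δ).Adj u v → f u ≠ f v) ↔
      (∀ a, Injective fun j => f (a, j)) ∧ ∀ i : Fin k, f (i.succ, 0) ≠ f (0, 0) := by
  simp only [G1, SimpleGraph.fromRel_adj]
  constructor
  · intro hf
    refine ⟨fun a j j' hjj' => ?_, fun i => hf ⟨by simp, .inr (.inr ⟨rfl, rfl, rfl⟩)⟩⟩
    by_contra hne
    exact hf (u := (a, j)) (v := (a, j')) ⟨by simp [hne], .inl (.inl rfl)⟩ hjj'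
  · rintro ⟨hinj, hstar⟩ u v ⟨huv, hrel⟩
    have ne_of_rel : ∀ x y : Fin (k + 1) × Fin (δ + 1), x ≠ y →
        (x.1 = y.1 ∨ x.2 = 0 ∧ y.2 = 0 ∧ (x.1 : ℕ) = 0) → f x ≠ f y := by
      rintro ⟨a, j⟩ ⟨b, j'⟩ hne (hab | ⟨hj, hj', ha⟩)
      · subst hab
        exact (hinj a).ne fun h => hne (h ▸ rfl)
      · simp only at hj hj' ha
        subst hj hj'
        obtain rfl : a = 0 := Fin.ext ha
        obtain ⟨i, rfl⟩ := Fin.exists_succ_eq.2 fun hb : b = 0 => hne (hb ▸ rfl)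
        exact (hstar i).symm
    exact hrel.elim (ne_of_rel u v huv) fun h => (ne_of_rel v u huv.symm h).symm

def G1_coloringEquiv :
    {f : Fin (k + 1) × Fin (δ + 1) → β // ∀ ⦃u v⦄, (G1 (k + 1) δ).Adj u v → f u ≠ f v} ≃
      Σ e : Fin (δ + 1) ↪ β, (Fin k → {e' : Fin (δ + 1) ↪ β // e' 0 ≠ e 0}) where
  toFun f :=
    have hf := (G1_coloring_iff f.1).1 f.2
    ⟨⟨fun j => f.1 (0, j), hf.1 0⟩,
      fun i => ⟨⟨fun j => f.1 (i.succ, j), hf.1 i.succ⟩, hf.2 i⟩⟩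
  invFun p := ⟨fun x => (Fin.cases p.1 (fun i => (p.2 i).1) x.1 : Fin (δ + 1) ↪ β) x.2, by
    refine (G1_coloring_iff _).2 ⟨fun a => ?_, fun i => (p.2 i).2⟩
    cases a using Fin.cases
    exacts [p.1.injective, (p.2 _).1.injective]⟩
  left_inv f := by
    ext ⟨a, j⟩
    cases a using Fin.cases <;> rfl
  right_inv _ := rfl

variable [Fintype β] [DecidableEq β]

theorem homCount_G1_succ :
    homCount (G1 (k + 1) δ) (fun a b : β => a ≠ b) =
      (Fintype.card β).descFactorial (δ + 1) *
        ((Fintype.card β - 1) * (Fintype.card β - 1).descFactorial δ) ^ k := by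
  rw [homCount, Nat.card_congr G1_coloringEquiv, Nat.card_sigma]
  simp only [Nat.card_eq_fintype_card, Fintype.card_fun,
    Fintype.card_embedding_fin_succ_apply_zero_ne, Fintype.card_fin, sum_const, card_univ,
    Fintype.card_embedding_eq, smul_eq_mul]

end G1

theorem Nat.prod_Icc_one_sub_eq_descFactorial (q δ : ℕ) :
    ∏ i ∈ Icc 1 δ, (q - i) = (q - 1).descFactorial δ := by
  induction δ with
  | zero => rfl
  | succ δ ih =>
    rw [prod_Icc_succ_top (by omega), ih, Nat.descFactorial_succ, mul_comm, Nat.sub_sub,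
      Nat.add_comm 1]

theorem homCount_G1_eq_general (δ n q : ℕ) (hn : δ + 1 ≤ n) :
    homCount (G1 (n / (δ + 1)) δ) (fun a b : Fin q => a ≠ b) =
      (∏ i ∈ Finset.range (δ + 1), (q - i)) *
        ((q - 1) * ∏ i ∈ Finset.Icc 1 δ, (q - i)) ^ (n / (δ + 1) - 1) := by
  obtain ⟨k, hk⟩ : ∃ k, n / (δ + 1) = k + 1 :=
    Nat.exists_eq_add_one.2 ((Nat.one_le_div_iff δ.succ_pos).2 hn)
  rw [hk, homCount_G1_succ, Fintype.card_fin, Nat.add_sub_cancel,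
    ← Nat.descFactorial_eq_prod_range, Nat.prod_Icc_one_sub_eq_descFactorial]

/-- For `δ ≥ 2`, `(δ+1) ∣ n` with `n ≥ δ+1`, and `q ≥ δ+1`, the number of proper
`q`-colorings of `G₁` is `q(q-1)⋯(q-δ) · [(q-1)·(q-1)(q-2)⋯(q-δ)]^{n/(δ+1)-1}`. -/
theorem homCount_G1_eq (δ n q : ℕ) (hδ : 2 ≤ δ) (hdvd : (δ + 1) ∣ n) (hn : δ + 1 ≤ n)
    (hq : δ + 1 ≤ q) :
    homCount (G1 (n / (δ + 1)) δ) (fun a b : Fin q => a ≠ b) =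
      (∏ i ∈ Finset.range (δ + 1), (q - i)) *
        ((q - 1) * ∏ i ∈ Finset.Icc 1 δ, (q - i)) ^ (n / (δ + 1) - 1) :=
  homCount_G1_eq_general δ n q hn
end

section
/- Let δ ≥ 1 and let G be a finite simple graph on n vertices with minimum degree at least δ. Then the number of proper 2-colorings of G satisfies hom(G, K_2) ≤ 2^{⌊n/(2δ)⌋}; moreover, when 2δ divides n, equality holds for the graph consisting of n/(2δ) disjoint copies of K_{δ,δ}. -/
/-- The disjoint union of `m` copies of the complete bipartite graph `K_{δ,δ}`: the copy `a`
has vertex set `{a} × (Fin δ ⊕ Fin δ)`, with all edges between the two parts of each copy. -/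
def copiesKdd (m δ : ℕ) : SimpleGraph (Fin m × (Fin δ ⊕ Fin δ)) :=
  SimpleGraph.fromRel fun x y => x.1 = y.1 ∧ x.2.isLeft = true ∧ y.2.isRight = true

private lemma fin2_eq_of_ne {a b c : Fin 2} (h1 : a ≠ b) (h2 : a ≠ c) : b = c := by
  revert h1 h2; revert a b c; decide

private lemma fin2_add_one {a b : Fin 2} (h : a ≠ b) : b = a + 1 := by
  revert h; revert a b; decide

private lemma agree_of_reachable {α : Type*} {G : SimpleGraph α} {f g : α → Fin 2}
    (hf : ∀ ⦃u v⦄, G.Adj u v → f u ≠ f v) (hg : ∀ ⦃u v⦄, G.Adj u v → g u ≠ g v) :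
    ∀ {u v : α}, G.Reachable u v → f u = g u → f v = g v := by
  intro u v h
  obtain ⟨w⟩ := h
  induction w with
  | nil => exact id
  | cons hab p ih =>
    intro hag
    exact ih (fin2_eq_of_ne (hf hab) (by rw [hag]; exact hg hab))

private lemma copies_adj {m δ : ℕ} {a b : Fin m} {x y : Fin δ ⊕ Fin δ} :
    (copiesKdd m δ).Adj (a, x) (b, y) ↔
      a = b ∧ ((x.isLeft ∧ y.isRight) ∨ (y.isLeft ∧ x.isRight)) := by
  simp only [copiesKdd, SimpleGraph.fromRel_adj, ne_eq, Prod.mk.injEq, not_and]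
  constructor
  · rintro ⟨h1, h2 | h2⟩
    · exact ⟨h2.1, Or.inl ⟨h2.2.1, h2.2.2⟩⟩
    · exact ⟨h2.1.symm, Or.inr ⟨h2.2.1, h2.2.2⟩⟩
  · rintro ⟨rfl, h2 | h2⟩
    · refine ⟨fun _ hxy => ?_, Or.inl ⟨rfl, h2.1, h2.2⟩⟩
      subst hxy; cases x <;> simp_all
    · refine ⟨fun _ hxy => ?_, Or.inr ⟨rfl, h2.1, h2.2⟩⟩
      subst hxy; cases x <;> simp_all

private lemma homCount_copies (m δ : ℕ) (hδ : 1 ≤ δ) :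
    homCount (copiesKdd m δ) (fun a b : Fin 2 => a ≠ b) = 2 ^ m := by
  have z : Fin δ := ⟨0, hδ⟩
  have key : {f : Fin m × (Fin δ ⊕ Fin δ) → Fin 2 //
      ∀ ⦃u v⦄, (copiesKdd m δ).Adj u v → f u ≠ f v} ≃ (Fin m → Fin 2) := by
    refine ⟨fun f a => f.1 (a, Sum.inl z), fun g => ⟨fun p =>
      Sum.elim (fun _ => g p.1) (fun _ => g p.1 + 1) p.2, ?_⟩, ?_, ?_⟩
    · rintro ⟨a, x⟩ ⟨b, y⟩ h
      rw [copies_adj] at h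
      obtain ⟨rfl, ⟨hx, hy⟩ | ⟨hy, hx⟩⟩ := h
      · cases x <;> cases y <;> simp_all
      · cases x <;> cases y <;> simp_all
    · rintro ⟨f, hf⟩
      apply Subtype.ext
      funext ⟨a, x⟩
      have hadj : ∀ i j : Fin δ, (copiesKdd m δ).Adj (a, Sum.inl i) (a, Sum.inr j) := by
        intro i j; rw [copies_adj]; simp
      cases x with
      | inl i =>
        exact fin2_eq_of_ne (fun h => hf (hadj z z) h.symm) (fun h => hf (hadj i z) h.symm)
      | inr j =>
        exact (fin2_add_one (hf (hadj z j))).symm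
    · intro g; rfl
  rw [homCount, Nat.card_congr key, Nat.card_fun]
  simp

private lemma homCount_le {α : Type*} [Fintype α] (δ n : ℕ) (hδ : 1 ≤ δ)
    (G : SimpleGraph α) (hcard : Fintype.card α = n)
    (hmin : ∀ v : α, δ ≤ Nat.card {w : α // G.Adj v w}) :
    homCount G (fun a b : Fin 2 => a ≠ b) ≤ 2 ^ (n / (2 * δ)) := by
  classical
  by_cases hne : Nonempty {f : α → Fin 2 // ∀ ⦃u v⦄, G.Adj u v → f u ≠ f v}
  swap
  · rw [homCount, Nat.card_eq_zero.mpr (Or.inl (not_nonempty_iff.mp hne))]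
    exact Nat.zero_le _
  obtain ⟨f0, hf0⟩ := hne
  haveI : Fintype G.ConnectedComponent := Fintype.ofFinite _
  -- Step 1: homCount ≤ 2 ^ (number of components)
  have hinj : Function.Injective
      (fun (f : {f : α → Fin 2 // ∀ ⦃u v⦄, G.Adj u v → f u ≠ f v})
        (c : G.ConnectedComponent) => f.1 c.out) := by
    intro f g h
    apply Subtype.ext
    funext v
    have hreach : G.Reachable (G.connectedComponentMk v).out v := by
      apply SimpleGraph.ConnectedComponent.exact
      exact (G.connectedComponentMk v).out_eq
    exact agree_of_reachable f.2 g.2 hreach (congrFun h _)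
  have h1 : homCount G (fun a b : Fin 2 => a ≠ b) ≤
      2 ^ Fintype.card G.ConnectedComponent := by
    calc homCount G (fun a b : Fin 2 => a ≠ b)
        ≤ Nat.card (G.ConnectedComponent → Fin 2) :=
          Nat.card_le_card_of_injective _ hinj
      _ = 2 ^ Fintype.card G.ConnectedComponent := by
          rw [Nat.card_fun]; simp [Nat.card_eq_fintype_card]
  refine h1.trans (Nat.pow_le_pow_right (by norm_num) ?_)
  -- Step 2: number of components ≤ n / (2δ)
  rw [Nat.le_div_iff_mul_le (by positivity)]
  -- every component fiber has at least 2δ vertices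
  have hfiber : ∀ c : G.ConnectedComponent,
      2 * δ ≤ (Finset.univ.filter fun v => G.connectedComponentMk v = c).card := by
    intro c
    set v := c.out with hv
    have hmkv : G.connectedComponentMk v = c := c.out_eq
    have hdeg : ∀ u : α, δ ≤ (Finset.univ.filter fun x => G.Adj u x).card := by
      intro u
      have := hmin u
      rwa [Nat.card_eq_fintype_card, Fintype.card_subtype] at this
    obtain ⟨w, hw⟩ : ∃ w, G.Adj v w := by
      have := hdeg v
      obtain ⟨w, hw⟩ := Finset.card_pos.mp (lt_of_lt_of_le hδ this)
      exact ⟨w, (Finset.mem_filter.mp hw).2⟩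
    set Nv := Finset.univ.filter fun x => G.Adj v x with hNv
    set Nw := Finset.univ.filter fun x => G.Adj w x with hNw
    have hdisj : Disjoint Nv Nw := by
      rw [Finset.disjoint_left]
      intro x hxv hxw
      have h1 : G.Adj v x := (Finset.mem_filter.mp hxv).2
      have h2 : G.Adj w x := (Finset.mem_filter.mp hxw).2
      exact hf0 hw (fin2_eq_of_ne (fun h => hf0 h1 h.symm) (fun h => hf0 h2 h.symm))
    have hsub : Nv ∪ Nw ⊆ Finset.univ.filter fun x => G.connectedComponentMk x = c := by
      intro x hx
      rw [Finset.mem_filter]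
      refine ⟨Finset.mem_univ _, ?_⟩
      rcases Finset.mem_union.mp hx with hx | hx
      · have : G.Adj v x := (Finset.mem_filter.mp hx).2
        rw [← hmkv]
        exact (SimpleGraph.ConnectedComponent.connectedComponentMk_eq_of_adj this).symm
      · have hwx : G.Adj w x := (Finset.mem_filter.mp hx).2
        rw [← hmkv]
        exact SimpleGraph.ConnectedComponent.sound
          ((hw.reachable.trans hwx.reachable).symm)
    calc 2 * δ = δ + δ := by ring
      _ ≤ Nv.card + Nw.card := Nat.add_le_add (hdeg v) (hdeg w)
      _ = (Nv ∪ Nw).card := (Finset.card_union_of_disjoint hdisj).symm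
      _ ≤ _ := Finset.card_le_card hsub
  calc Fintype.card G.ConnectedComponent * (2 * δ)
      = ∑ c : G.ConnectedComponent, 2 * δ := by
        rw [Finset.sum_const, Finset.card_univ, smul_eq_mul]
    _ ≤ ∑ c : G.ConnectedComponent,
        (Finset.univ.filter fun v => G.connectedComponentMk v = c).card :=
        Finset.sum_le_sum fun c _ => hfiber c
    _ = Fintype.card α := by
        rw [← Finset.card_univ,
          Finset.card_eq_sum_card_fiberwise (f := G.connectedComponentMk)
            (fun x _ => Finset.mem_univ _)]
    _ = n := hcard


/-- Let `δ ≥ 1` and let `G` be a simple graph on `n` vertices with minimum degree at least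
`δ`.  Then the number of proper 2-colorings of `G` is at most `2^{⌊n/(2δ)⌋}`; moreover, when
`2δ ∣ n`, equality holds for `n/(2δ)` disjoint copies of `K_{δ,δ}`. -/
theorem homCount_K2_le {α : Type*} [Fintype α] (δ n : ℕ) (hδ : 1 ≤ δ)
    (G : SimpleGraph α) (hcard : Fintype.card α = n)
    (hmin : ∀ v : α, δ ≤ Nat.card {w : α // G.Adj v w}) :
    homCount G (fun a b : Fin 2 => a ≠ b) ≤ 2 ^ (n / (2 * δ)) ∧
      (2 * δ ∣ n →
        homCount (copiesKdd (n / (2 * δ)) δ) (fun a b : Fin 2 => a ≠ b) =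
          2 ^ (n / (2 * δ))) := by
  exact ⟨homCount_le δ n hδ G hcard hmin, fun _ => homCount_copies _ δ hδ⟩
end
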